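/- Suppose A, G are n×n real matrices, X is invertible with ‖X⁻¹ A G X − diag(I_r, 0)‖₂ = ε < 1 and r = rank(A). Then σ₁(A G) ≤ κ(X)(1+ε) and σ_r(A G) ≥ σ_r(A A^g) − κ(X)·ε, where A^g is the generalized inverse with X⁻¹ A A^g X = diag(I_r, 0); consequently, if κ(X) = 1 then κ(A G) = σ₁(A G)/σ_r(A G) ≤ (1+ε)/(1−ε). -/

import Mathlib

/-!
Writing `κ = σ₁(X)/σₙ(X)`, conjugation by `X` costs at most a factor `κ` in operator norm, since
`‖X‖ = σ₁(X)` and `‖X⁻¹‖ = 1/σₙ(X)`. Hence `σ₁(AG) ≤ ‖AG‖ ≤ κ‖X⁻¹AGX‖ ≤ κ(1 + ε)`, and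
`AAᵍ - AG = X (diag(I_r, 0) - X⁻¹AGX) X⁻¹` has norm at most `κε`, so Weyl's inequality
`σᵢ(M) - ‖M - N‖ ≤ σᵢ(N)` (a consequence of Courant–Fischer) gives the lower bound on `σ_r(AG)`.
Finally `AAᵍ = X diag(I_r, 0) X⁻¹` is an idempotent of rank `r`, so `σ_r(AAᵍ) ≥ 1`; when `κ = 1`
this yields `σ_r(AG) ≥ 1 - ε > 0`, and the quotient bound follows.
-/

open scoped Matrix.Norms.L2Operator

theorem Matrix.isHermitian_transpose_mul_self {m n α : Type*} [CommSemiring α] [StarRing α]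
    [TrivialStar α] [Fintype m] (A : Matrix m n α) : (A.transpose * A).IsHermitian := by
  rw [Matrix.IsHermitian, Matrix.conjTranspose_mul, Matrix.conjTranspose_eq_transpose_of_trivial,
    Matrix.conjTranspose_eq_transpose_of_trivial, Matrix.transpose_transpose]

/-- The n×n block diagonal matrix diag(I_r, 0). -/
def diagIr (n r : ℕ) : Matrix (Fin n) (Fin n) ℝ :=
  Matrix.of fun i j => if i = j ∧ (i : ℕ) < r then (1 : ℝ) else 0

/-- The i-th largest singular value (0-indexed: `i = 0` is the largest) of a real square
matrix, defined as the square root of the i-th largest eigenvalue of MᵀM. -/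
noncomputable def singularValue {n : ℕ} (M : Matrix (Fin n) (Fin n) ℝ) (i : Fin n) : ℝ :=
  Real.sqrt (((Matrix.isHermitian_transpose_mul_self M).eigenvalues ∘
    Tuple.sort (Matrix.isHermitian_transpose_mul_self M).eigenvalues) i.rev)

open scoped RealInnerProductSpace
open Matrix Module

namespace OrthonormalBasis

variable {ι 𝕜 E : Type*} [Fintype ι] [RCLike 𝕜] [NormedAddCommGroup E] [InnerProductSpace 𝕜 E]
  (b : OrthonormalBasis ι 𝕜 E)

theorem inner_eq_zero_of_mem_span_image {s : Set ι} {x : E} (hx : x ∈ Submodule.span 𝕜 (b '' s))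
    {i : ι} (hi : i ∉ s) : inner 𝕜 (b i) x = 0 := by
  have hle : Submodule.span 𝕜 (b '' s) ≤ (𝕜 ∙ b i)ᗮ := by
    rw [Submodule.span_le]
    rintro _ ⟨j, hj, rfl⟩
    exact Submodule.mem_orthogonal_singleton_iff_inner_right.mpr
      (b.orthonormal.inner_eq_zero (ne_of_mem_of_not_mem hj hi).symm)
  exact Submodule.mem_orthogonal_singleton_iff_inner_right.mp (hle hx)

theorem finrank_span_image (s : Set ι) [Fintype s] :
    finrank 𝕜 (Submodule.span 𝕜 (b '' s)) = Fintype.card s := by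
  rw [Set.image_eq_range]
  exact finrank_span_eq_card (b.orthonormal.linearIndependent.comp _ Subtype.val_injective)

theorem span_image_univ : Submodule.span 𝕜 (b '' Set.univ) = ⊤ := by
  rw [Set.image_univ, ← b.coe_toBasis, b.toBasis.span_eq]

end OrthonormalBasis

namespace Matrix

variable {m R : Type*} [Fintype m] [DecidableEq m] [CommRing R]

theorem mul_nonsing_inv_conj_mul_nonsing_inv {X : Matrix m m R} (hX : IsUnit X) (B : Matrix m m R) :
    X * (X⁻¹ * B * X) * X⁻¹ = B := by
  have hdet := (isUnit_iff_isUnit_det X).mp hX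
  rw [← Matrix.mul_assoc X, mul_nonsing_inv_cancel_right X _ hdet,
    mul_nonsing_inv_cancel_left X _ hdet]

theorem isIdempotentElem_mul_mul_nonsing_inv {X P : Matrix m m R} (hX : IsUnit X)
    (hP : IsIdempotentElem P) : IsIdempotentElem (X * P * X⁻¹) := by
  calc X * P * X⁻¹ * (X * P * X⁻¹) = X * (P * (X⁻¹ * X) * P) * X⁻¹ := by
        simp only [Matrix.mul_assoc]
    _ = X * P * X⁻¹ := by
        rw [nonsing_inv_mul X ((isUnit_iff_isUnit_det X).mp hX), Matrix.mul_one, hP.eq]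

end Matrix

section SingularValue

variable {n : ℕ} (M : Matrix (Fin n) (Fin n) ℝ)

/-- Eigenvectors of `Mᵀ * M`, reindexed so that the `i`-th one belongs to `singularValue M i`. -/
noncomputable def rightSingularBasis : OrthonormalBasis (Fin n) ℝ (EuclideanSpace ℝ (Fin n)) :=
  ((isHermitian_transpose_mul_self M).eigenvectorBasis.reindex
    (Tuple.sort (isHermitian_transpose_mul_self M).eigenvalues).symm).reindex Fin.revPerm

local notation "𝑣" => rightSingularBasis
local notation "𝑇" => @toEuclideanCLM ℝ (Fin _) _ _ _

theorem inner_toEuclideanCLM_transpose_mul_self (x y : EuclideanSpace ℝ (Fin n)) :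
    ⟪x, 𝑇 (Mᵀ * M) y⟫ = ⟪𝑇 M x, 𝑇 M y⟫ := by
  rw [← conjTranspose_eq_transpose_of_trivial, ← star_eq_conjTranspose, map_mul, map_star,
    mul_apply_eq_comp, ContinuousLinearMap.star_eq_adjoint,
    ContinuousLinearMap.adjoint_inner_right]

theorem toEuclideanCLM_transpose_mul_self_rightSingularBasis_eq (i : Fin n) :
    𝑇 (Mᵀ * M) (𝑣 M i) =
      (isHermitian_transpose_mul_self M).eigenvalues
        (Tuple.sort (isHermitian_transpose_mul_self M).eigenvalues i.rev) • 𝑣 M i := by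
  apply (WithLp.equiv 2 (Fin n → ℝ)).injective
  simpa [rightSingularBasis, OrthonormalBasis.reindex_apply] using
    (isHermitian_transpose_mul_self M).mulVec_eigenvectorBasis _

theorem eigenvalues_sort_rev_eq_norm_sq (i : Fin n) :
    (isHermitian_transpose_mul_self M).eigenvalues
        (Tuple.sort (isHermitian_transpose_mul_self M).eigenvalues i.rev) =
      ‖𝑇 M (𝑣 M i)‖ ^ 2 := by
  rw [← real_inner_self_eq_norm_sq, ← inner_toEuclideanCLM_transpose_mul_self,
    toEuclideanCLM_transpose_mul_self_rightSingularBasis_eq, real_inner_smul_right,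
    real_inner_self_eq_norm_sq, (𝑣 M).norm_eq_one, one_pow, mul_one]

theorem singularValue_eq_norm_toEuclideanCLM_rightSingularBasis (i : Fin n) :
    singularValue M i = ‖𝑇 M (𝑣 M i)‖ := by
  rw [singularValue, Function.comp_apply, eigenvalues_sort_rev_eq_norm_sq,
    Real.sqrt_sq (norm_nonneg _)]

theorem toEuclideanCLM_transpose_mul_self_rightSingularBasis (i : Fin n) :
    𝑇 (Mᵀ * M) (𝑣 M i) = singularValue M i ^ 2 • 𝑣 M i := by
  rw [toEuclideanCLM_transpose_mul_self_rightSingularBasis_eq, eigenvalues_sort_rev_eq_norm_sq,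
    singularValue_eq_norm_toEuclideanCLM_rightSingularBasis]

theorem singularValue_nonneg (i : Fin n) : 0 ≤ singularValue M i :=
  Real.sqrt_nonneg _

theorem singularValue_antitone : Antitone (singularValue M) := fun _ _ hij =>
  Real.sqrt_le_sqrt (Tuple.monotone_sort _ (Fin.rev_le_rev.mpr hij))

theorem norm_toEuclideanCLM_sq_eq_sum (x : EuclideanSpace ℝ (Fin n)) :
    ‖𝑇 M x‖ ^ 2 = ∑ i, singularValue M i ^ 2 * ⟪𝑣 M i, x⟫ ^ 2 := by
  rw [← real_inner_self_eq_norm_sq, ← inner_toEuclideanCLM_transpose_mul_self,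
    ← (𝑣 M).sum_inner_mul_inner]
  refine Finset.sum_congr rfl fun i _ => ?_
  have h : ⟪𝑣 M i, 𝑇 (Mᵀ * M) x⟫ = singularValue M i ^ 2 * ⟪𝑣 M i, x⟫ := by
    rw [inner_toEuclideanCLM_transpose_mul_self, real_inner_comm,
      ← inner_toEuclideanCLM_transpose_mul_self,
      toEuclideanCLM_transpose_mul_self_rightSingularBasis, real_inner_smul_right, real_inner_comm]
  rw [h, real_inner_comm x]
  ring

theorem norm_toEuclideanCLM_le_of_mem_span {i : Fin n} {x : EuclideanSpace ℝ (Fin n)}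
    (hx : x ∈ Submodule.span ℝ (𝑣 M '' Set.Ici i)) : ‖𝑇 M x‖ ≤ singularValue M i * ‖x‖ := by
  refine (sq_le_sq₀ (norm_nonneg _) (mul_nonneg (singularValue_nonneg M i) (norm_nonneg x))).mp ?_
  rw [mul_pow, norm_toEuclideanCLM_sq_eq_sum, ← (𝑣 M).sum_sq_inner_right x, Finset.mul_sum]
  refine Finset.sum_le_sum fun k _ => ?_
  by_cases hk : k ∈ Set.Ici i
  · gcongr
    · exact singularValue_nonneg M k
    · exact singularValue_antitone M hk
  · rw [(𝑣 M).inner_eq_zero_of_mem_span_image hx hk]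
    simp

theorem le_norm_toEuclideanCLM_of_mem_span {i : Fin n} {x : EuclideanSpace ℝ (Fin n)}
    (hx : x ∈ Submodule.span ℝ (𝑣 M '' Set.Iic i)) : singularValue M i * ‖x‖ ≤ ‖𝑇 M x‖ := by
  refine (sq_le_sq₀ (mul_nonneg (singularValue_nonneg M i) (norm_nonneg x)) (norm_nonneg _)).mp ?_
  rw [mul_pow, norm_toEuclideanCLM_sq_eq_sum, ← (𝑣 M).sum_sq_inner_right x, Finset.mul_sum]
  refine Finset.sum_le_sum fun k _ => ?_
  by_cases hk : k ∈ Set.Iic i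
  · gcongr
    · exact singularValue_nonneg M i
    · exact singularValue_antitone M hk
  · rw [(𝑣 M).inner_eq_zero_of_mem_span_image hx hk]
    simp

/-- The max-min half of Courant–Fischer: `V` meets the span of the singular vectors `k ≥ i`. -/
theorem le_singularValue_of_mul_norm_le {i : Fin n} {c : ℝ}
    (V : Submodule ℝ (EuclideanSpace ℝ (Fin n))) (hV : i < finrank ℝ V)
    (h : ∀ x ∈ V, c * ‖x‖ ≤ ‖𝑇 M x‖) : c ≤ singularValue M i := by
  set W := Submodule.span ℝ (𝑣 M '' Set.Ici i)
  have hW : finrank ℝ W = n - i := by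
    rw [(𝑣 M).finrank_span_image, Fintype.card_Ici, Fin.card_Ici]
  obtain ⟨x, hxV, hxW, hx0⟩ : ∃ x ∈ V, x ∈ W ∧ x ≠ 0 := by
    by_contra! hdisj
    have := Submodule.finrank_add_finrank_le_of_disjoint (Submodule.disjoint_def.mpr hdisj)
    rw [hW, finrank_euclideanSpace_fin] at this
    omega
  exact le_of_mul_le_mul_right ((h x hxV).trans (norm_toEuclideanCLM_le_of_mem_span M hxW))
    (norm_pos_iff.mpr hx0)

theorem singularValue_sub_l2_opNorm_sub_le (N : Matrix (Fin n) (Fin n) ℝ) (i : Fin n) :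
    singularValue M i - ‖M - N‖ ≤ singularValue N i := by
  refine le_singularValue_of_mul_norm_le N (Submodule.span ℝ (𝑣 M '' Set.Iic i)) ?_ ?_
  · rw [(𝑣 M).finrank_span_image, Fintype.card_Iic, Fin.card_Iic]
    omega
  · intro x hx
    have hMN : ‖𝑇 M x - 𝑇 N x‖ ≤ ‖M - N‖ * ‖x‖ := by
      rw [← _root_.sub_apply, ← map_sub]
      exact (𝑇 (M - N)).le_opNorm x
    have := le_norm_toEuclideanCLM_of_mem_span M hx
    have := norm_sub_norm_le (𝑇 M x) (𝑇 N x)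
    linarith [sub_mul (singularValue M i) ‖M - N‖ ‖x‖]

theorem singularValue_le_l2_opNorm (i : Fin n) : singularValue M i ≤ ‖M‖ := by
  rw [singularValue_eq_norm_toEuclideanCLM_rightSingularBasis]
  simpa [(𝑣 M).norm_eq_one, l2_opNorm_toEuclideanCLM] using (𝑇 M).le_opNorm (𝑣 M i)

theorem norm_toEuclideanCLM_le_singularValue_zero_mul (hn : 0 < n) (x : EuclideanSpace ℝ (Fin n)) :
    ‖𝑇 M x‖ ≤ singularValue M ⟨0, hn⟩ * ‖x‖ := by
  refine norm_toEuclideanCLM_le_of_mem_span M ?_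
  rw [show Set.Ici (⟨0, hn⟩ : Fin n) = Set.univ from Set.eq_univ_of_forall fun k => Nat.zero_le k,
    (𝑣 M).span_image_univ]
  exact Submodule.mem_top

theorem singularValue_last_mul_norm_le (hn : 0 < n) (x : EuclideanSpace ℝ (Fin n)) :
    singularValue M ⟨n - 1, Nat.sub_one_lt_of_lt hn⟩ * ‖x‖ ≤ ‖𝑇 M x‖ := by
  refine le_norm_toEuclideanCLM_of_mem_span M ?_
  rw [show Set.Iic (⟨n - 1, Nat.sub_one_lt_of_lt hn⟩ : Fin n) = Set.univ from
      Set.eq_univ_of_forall fun k => Nat.le_sub_one_of_lt k.isLt,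
    (𝑣 M).span_image_univ]
  exact Submodule.mem_top

theorem l2_opNorm_le_singularValue_zero (hn : 0 < n) : ‖M‖ ≤ singularValue M ⟨0, hn⟩ :=
  (𝑇 M).opNorm_le_bound (singularValue_nonneg M _)
    (norm_toEuclideanCLM_le_singularValue_zero_mul M hn)

theorem singularValue_pos_of_isUnit {X : Matrix (Fin n) (Fin n) ℝ} (hX : IsUnit X) (i : Fin n) :
    0 < singularValue X i := by
  rw [singularValue_eq_norm_toEuclideanCLM_rightSingularBasis, norm_pos_iff]
  intro h0
  have := congrArg (𝑇 X⁻¹) h0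
  rw [← mul_apply_eq_comp, ← map_mul, nonsing_inv_mul X ((isUnit_iff_isUnit_det X).mp hX),
    map_one, one_apply_eq_self, map_zero] at this
  exact (𝑣 X).orthonormal.ne_zero i this

theorem l2_opNorm_nonsing_inv_le (hn : 0 < n) {X : Matrix (Fin n) (Fin n) ℝ} (hX : IsUnit X) :
    ‖X⁻¹‖ ≤ (singularValue X ⟨n - 1, Nat.sub_one_lt_of_lt hn⟩)⁻¹ := by
  have hσ := singularValue_pos_of_isUnit hX ⟨n - 1, Nat.sub_one_lt_of_lt hn⟩
  refine (𝑇 X⁻¹).opNorm_le_bound (inv_nonneg.mpr hσ.le) fun y => ?_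
  have := singularValue_last_mul_norm_le X hn (𝑇 X⁻¹ y)
  rw [← mul_apply_eq_comp, ← map_mul, mul_nonsing_inv X ((isUnit_iff_isUnit_det X).mp hX),
    map_one, one_apply_eq_self] at this
  rw [inv_mul_eq_div, le_div_iff₀ hσ, mul_comm]
  exact this

theorem l2_opNorm_conj_le (hn : 0 < n) {X : Matrix (Fin n) (Fin n) ℝ} (hX : IsUnit X)
    (B : Matrix (Fin n) (Fin n) ℝ) :
    ‖X * B * X⁻¹‖ ≤
      singularValue X ⟨0, hn⟩ / singularValue X ⟨n - 1, Nat.sub_one_lt_of_lt hn⟩ * ‖B‖ := by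
  calc ‖X * B * X⁻¹‖ ≤ ‖X‖ * ‖B‖ * ‖X⁻¹‖ :=
        (l2_opNorm_mul _ _).trans (mul_le_mul_of_nonneg_right (l2_opNorm_mul _ _) (norm_nonneg _))
    _ ≤ singularValue X ⟨0, hn⟩ * ‖B‖ * (singularValue X ⟨n - 1, Nat.sub_one_lt_of_lt hn⟩)⁻¹ := by
        gcongr
        · exact mul_nonneg (singularValue_nonneg X _) (norm_nonneg B)
        · exact l2_opNorm_le_singularValue_zero X hn
        · exact l2_opNorm_nonsing_inv_le hn hX
    _ = _ := by ring

theorem finrank_range_toEuclideanCLM (P : Matrix (Fin n) (Fin n) ℝ) :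
    finrank ℝ (LinearMap.range (𝑇 P).toLinearMap) = P.rank := by
  rw [rank_eq_finrank_range_toLin P (EuclideanSpace.basisFun (Fin n) ℝ).toBasis
    (EuclideanSpace.basisFun (Fin n) ℝ).toBasis]
  rfl

theorem one_le_singularValue_of_isIdempotentElem {P : Matrix (Fin n) (Fin n) ℝ}
    (hP : IsIdempotentElem P) {i : Fin n} (hi : (i : ℕ) < P.rank) : 1 ≤ singularValue P i := by
  refine le_singularValue_of_mul_norm_le P (LinearMap.range (𝑇 P).toLinearMap)
    (by rwa [finrank_range_toEuclideanCLM]) ?_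
  rintro _ ⟨y, rfl⟩
  rw [one_mul, ContinuousLinearMap.coe_coe, ← mul_apply_eq_comp, ← map_mul, hP.eq]

end SingularValue

theorem diagIr_eq_diagonal (n r : ℕ) :
    diagIr n r = diagonal fun i : Fin n => if (i : ℕ) < r then (1 : ℝ) else 0 := by
  ext i j
  by_cases h : i = j
  · subst h
    simp [diagIr]
  · simp [diagIr, h]

theorem isIdempotentElem_diagIr (n r : ℕ) : IsIdempotentElem (diagIr n r) := by
  rw [diagIr_eq_diagonal, IsIdempotentElem, diagonal_mul_diagonal]
  congr 1
  ext i
  split_ifs <;> simp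

theorem l2_opNorm_diagIr_le (n r : ℕ) : ‖diagIr n r‖ ≤ 1 := by
  rw [diagIr_eq_diagonal, l2_opNorm_diagonal]
  refine (pi_norm_le_iff_of_nonneg zero_le_one).mpr fun i => ?_
  split_ifs <;> simp

theorem rank_diagIr {n r : ℕ} (hr : r ≤ n) : (diagIr n r).rank = r := by
  rw [diagIr_eq_diagonal, rank_diagonal]
  simp only [ne_eq, ite_eq_right_iff, one_ne_zero, imp_false, not_not]
  rw [Fintype.card_subtype, Fin.card_filter_val_lt, min_eq_right hr]

/-- If ‖X⁻¹ A G X − diag(I_r, 0)‖₂ = ε < 1 with X invertible and r = rank(A), then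
σ₁(A G) ≤ κ(X)(1+ε), σ_r(A G) ≥ σ_r(A A^g) − κ(X)·ε (where A^g is the generalized inverse
with X⁻¹ A A^g X = diag(I_r, 0)); consequently, if κ(X) = 1 then
κ(A G) = σ₁(A G)/σ_r(A G) ≤ (1+ε)/(1−ε). -/
theorem stmt17 {n : ℕ} (hn : 0 < n) (A G X Ag : Matrix (Fin n) (Fin n) ℝ) (ε : ℝ)
    (hX : IsUnit X)
    (hε : ‖X⁻¹ * (A * G) * X - diagIr n A.rank‖ = ε) (hε1 : ε < 1)
    (hAg : X⁻¹ * (A * Ag) * X = diagIr n A.rank) :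
    singularValue (A * G) ⟨0, hn⟩ ≤
      singularValue X ⟨0, hn⟩ / singularValue X ⟨n - 1, by omega⟩ * (1 + ε) ∧
    (∀ i : Fin n, (i : ℕ) + 1 = A.rank →
      singularValue (A * Ag) i - singularValue X ⟨0, hn⟩ / singularValue X ⟨n - 1, by omega⟩ * ε ≤
        singularValue (A * G) i) ∧
    (singularValue X ⟨0, hn⟩ / singularValue X ⟨n - 1, by omega⟩ = 1 →
      ∀ i : Fin n, (i : ℕ) + 1 = A.rank →
        singularValue (A * G) ⟨0, hn⟩ / singularValue (A * G) i ≤ (1 + ε) / (1 - ε)) := by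
  set κ := singularValue X ⟨0, hn⟩ / singularValue X ⟨n - 1, by omega⟩
  set D := diagIr n A.rank
  have hε0 : 0 ≤ ε := hε ▸ norm_nonneg _
  have hAAg : A * Ag = X * D * X⁻¹ := by rw [← hAg, mul_nonsing_inv_conj_mul_nonsing_inv hX]
  have hσ₁ : singularValue (A * G) ⟨0, hn⟩ ≤ κ * (1 + ε) :=
    calc singularValue (A * G) ⟨0, hn⟩ ≤ ‖A * G‖ := singularValue_le_l2_opNorm _ _
      _ ≤ κ * ‖X⁻¹ * (A * G) * X‖ := by
          conv_lhs => rw [← mul_nonsing_inv_conj_mul_nonsing_inv hX (A * G)]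
          exact l2_opNorm_conj_le hn hX _
      _ ≤ κ * (1 + ε) := by
          have hκ : 0 ≤ κ := div_nonneg (singularValue_nonneg X _) (singularValue_nonneg X _)
          grw [norm_le_norm_add_norm_sub' _ D, hε, l2_opNorm_diagIr_le]
  have hσr (i : Fin n) : singularValue (A * Ag) i - κ * ε ≤ singularValue (A * G) i := by
    have hdiff : ‖A * Ag - A * G‖ ≤ κ * ε := by
      rw [hAAg, ← mul_nonsing_inv_conj_mul_nonsing_inv hX (A * G), ← sub_mul, ← Matrix.mul_sub,
        ← hε, norm_sub_rev]
      exact l2_opNorm_conj_le hn hX _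
    linarith [singularValue_sub_l2_opNorm_sub_le (A * Ag) (A * G) i]
  refine ⟨hσ₁, fun i _ => hσr i, fun hκ1 i hi => ?_⟩
  have hrank : A.rank ≤ (A * Ag).rank :=
    calc A.rank = D.rank := (rank_diagIr (by omega)).symm
      _ ≤ (X⁻¹ * (A * Ag)).rank := hAg ▸ rank_mul_le_left _ _
      _ ≤ (A * Ag).rank := rank_mul_le_right _ _
  have hone : 1 ≤ singularValue (A * Ag) i :=
    one_le_singularValue_of_isIdempotentElem
      (hAAg ▸ isIdempotentElem_mul_mul_nonsing_inv hX (isIdempotentElem_diagIr _ _)) (by omega)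
  have hσr' := hσr i
  rw [hκ1, one_mul] at hσ₁ hσr'
  exact div_le_div₀ (by linarith) hσ₁ (by linarith) (by linarith)
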